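/- For the group-similarity corrupted affinity matrix W̃, the value N_i w_i + Σ_{j≠i} N_j w̃_{i,j} is a (standard) eigenvalue of the corrupted Laplacian L̃ with geometric multiplicity at least N_i − 1; that is, the kernel of L̃ − (N_i w_i + Σ_{j≠i} N_j w̃_{i,j})·I has dimension at least N_i − 1. -/

import Mathlib

/-!
Let `B` be block `i`. Every vector `v` supported on `B` with entries summing to zero is an
eigenvector of `L̃`. For `p ∈ B` the row `W̃ p` equals, off the diagonal, the vector `c` with
`c q = w_i` on `B` and `c q = w̃_{i,j}` on block `j ≠ i`, so `(L̃ v) p = ∑_q c q (v p - v q)`;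
since `c` is constant on `B`, where `v` lives, `∑_q c q v q = 0`, leaving
`(∑_q c q) v p = (N_i w_i + ∑_{j ≠ i} N_j w̃_{i,j}) v p`. For `p ∉ B` the row `W̃ p` is
constant on `B`, so both sides vanish. These vectors form a space of dimension `N_i - 1`.
-/

open Finset Matrix

theorem card_fiber_eq_of_mem_Ico {ι : Type*} [Fintype ι] [DecidableEq ι] {N : ℕ}
    (n s : ι → ℕ) (hN : N = ∑ j, n j) (β : Fin N → ι)
    (hβ : ∀ m : Fin N, s (β m) ≤ m ∧ (m : ℕ) < s (β m) + n (β m)) (j : ι) :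
    #{m | β m = j} = n j := by
  -- Each class injects into its interval, and the class sizes and the `n j` both add up to `N`.
  have hle : ∀ j, #{m | β m = j} ≤ n j := fun j =>
    calc #{m | β m = j} ≤ #(Ico (s j) (s j + n j)) :=
          card_le_card_of_injOn (fun m => (m : ℕ))
            (fun m hm => by simpa [← (mem_filter.1 (mem_coe.1 hm)).2] using hβ m)
            Fin.val_injective.injOn
      _ = n j := by simp
  have hsum : ∑ j, #{m | β m = j} = ∑ j, n j := by
    rw [← card_eq_sum_card_fiberwise (fun m _ => mem_coe.2 (mem_univ (β m))), card_univ,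
      Fintype.card_fin, hN]
  exact (sum_eq_sum_iff_of_le fun j _ => hle j).1 hsum j (mem_univ j)

theorem sum_comp_eq_sum_card_nsmul {ι κ M : Type*} [Fintype ι] [Fintype κ] [DecidableEq κ]
    [AddCommMonoid M] (β : ι → κ) (g : κ → M) :
    ∑ q, g (β q) = ∑ j, #{q | β q = j} • g j := by
  rw [← sum_fiberwise univ β]
  refine sum_congr rfl fun j _ => ?_
  rw [← sum_const]
  exact sum_congr rfl fun q hq => by rw [(mem_filter.1 hq).2]

section ZeroSum

variable {ι : Type*} [Fintype ι] [DecidableEq ι]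

def zeroSumSupportedOn (K : Type*) [Field K] (s : Finset ι) : Submodule K (ι → K) where
  carrier := {v | (∀ q ∉ s, v q = 0) ∧ ∑ q, v q = 0}
  add_mem' {u v} hu hv :=
    ⟨fun q hq => by simp [hu.1 q hq, hv.1 q hq], by simp [sum_add_distrib, hu.2, hv.2]⟩
  zero_mem' := ⟨fun _ _ => rfl, by simp⟩
  smul_mem' c v hv := ⟨fun q hq => by simp [hv.1 q hq], by simp [← mul_sum, hv.2]⟩

theorem card_sub_one_le_finrank_zeroSumSupportedOn {K : Type*} [Field K] (s : Finset ι) :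
    #s - 1 ≤ Module.finrank K (zeroSumSupportedOn K s) := by
  rcases s.eq_empty_or_nonempty with rfl | ⟨m₀, hm₀⟩
  · simp
  let f : s.erase m₀ → ι → K := fun m => Pi.single (m : ι) 1 - Pi.single m₀ 1
  have hf_mem : ∀ m, f m ∈ zeroSumSupportedOn K s := fun m => by
    have hm : (m : ι) ∈ s := mem_of_mem_erase m.2
    refine ⟨fun q hq => ?_, by simp [f, sum_sub_distrib]⟩
    simp [f, (ne_of_mem_of_not_mem hm hq).symm, (ne_of_mem_of_not_mem hm₀ hq).symm]
  -- Evaluating a combination of the `f m` at `m' ≠ m₀` reads off the coefficient of `f m'`.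
  have hf_indep : LinearIndependent K f := by
    refine Fintype.linearIndependent_iff.2 fun c hc m' => ?_
    have hm' : (m' : ι) ≠ m₀ := ne_of_mem_erase m'.2
    have := congrFun hc m'
    simp only [Finset.sum_apply, Pi.smul_apply, smul_eq_mul, Pi.zero_apply, f, Pi.sub_apply,
      Pi.single_apply, if_neg hm', Subtype.val_inj] at this
    simpa using this
  have hg : LinearIndependent K (fun m => (⟨f m, hf_mem m⟩ : zeroSumSupportedOn K s)) :=
    LinearIndependent.of_comp (zeroSumSupportedOn K s).subtype hf_indep
  calc #s - 1 = Fintype.card (s.erase m₀) := by rw [Fintype.card_coe, card_erase_of_mem hm₀]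
    _ ≤ _ := hg.fintype_card_le_finrank

end ZeroSum

section Laplacian

variable {ι R : Type*} [Fintype ι] [DecidableEq ι] [CommRing R]

theorem laplacian_mulVec_apply (A : Matrix ι ι R) (v : ι → R) (p : ι) :
    (((diagonal fun p => ∑ q, A p q) - A) *ᵥ v) p = ∑ q, A p q * (v p - v q) := by
  rw [sub_mulVec, Pi.sub_apply, mulVec_diagonal]
  simp [mulVec, dotProduct, mul_sub, sum_mul, sum_sub_distrib]

theorem laplacian_mulVec_eq_smul_of_mem_zeroSumSupportedOn {K : Type*} [Field K]
    {A : Matrix ι ι K} {s : Finset ι} {c : ι → K} {a : K}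
    (hin : ∀ p ∈ s, ∀ q, q ≠ p → A p q = c q) (hc : ∀ q ∈ s, c q = a)
    (hout : ∀ p ∉ s, ∃ b, ∀ q ∈ s, A p q = b)
    {v : ι → K} (hv : v ∈ zeroSumSupportedOn K s) :
    ((diagonal fun p => ∑ q, A p q) - A) *ᵥ v = (∑ q, c q) • v := by
  obtain ⟨hsupp, hsum⟩ := hv
  ext p
  rw [laplacian_mulVec_apply, Pi.smul_apply, smul_eq_mul]
  by_cases hp : p ∈ s
  · have hcv : ∀ q, c q * v q = a * v q := fun q => by
      by_cases hq : q ∈ s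
      · rw [hc q hq]
      · rw [hsupp q hq, mul_zero, mul_zero]
    calc ∑ q, A p q * (v p - v q) = ∑ q, c q * (v p - v q) := sum_congr rfl fun q _ => by
          by_cases hqp : q = p
          · simp [hqp]
          · rw [hin p hp q hqp]
      _ = (∑ q, c q) * v p - a * ∑ q, v q := by
          simp [mul_sub, sum_sub_distrib, sum_mul, hcv, mul_sum]
      _ = (∑ q, c q) * v p := by rw [hsum, mul_zero, sub_zero]
  · obtain ⟨b, hb⟩ := hout p hp
    have hAv : ∀ q, A p q * v q = b * v q := fun q => by
      by_cases hq : q ∈ s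
      · rw [hb q hq]
      · rw [hsupp q hq, mul_zero, mul_zero]
    simp [hsupp p hp, hAv, ← mul_sum, hsum]

end Laplacian

section CorruptedAffinity

variable {N : ℕ} {κ : Type*} [DecidableEq κ] {β : Fin N → κ} {w wt : κ → ℝ} {i : κ}
  {W Wt : Matrix (Fin N) (Fin N) ℝ}

theorem corruptedAffinity_apply_of_mem_block
    (hW : ∀ m p, W m p = if m ≠ p ∧ β m = β p then w (β m) else 0)
    (hWt : ∀ m p, Wt m p =
      if β m = β p then W m p
      else if β m = i then wt (β p)
      else if β p = i then wt (β m)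
      else 0)
    {p q : Fin N} (hp : β p = i) (hqp : q ≠ p) :
    Wt p q = if β q = i then w i else wt (β q) := by
  by_cases hq : β q = i
  · simp [hWt, hW, hp, hq, Ne.symm hqp]
  · simp [hWt, hp, hq, Ne.symm hq]

theorem corruptedAffinity_apply_of_not_mem_block
    (hWt : ∀ m p, Wt m p =
      if β m = β p then W m p
      else if β m = i then wt (β p)
      else if β p = i then wt (β m)
      else 0)
    {p q : Fin N} (hp : β p ≠ i) (hq : β q = i) :
    Wt p q = wt (β p) := by
  simp [hWt, hq, hp]

end CorruptedAffinity

theorem groupSim_standard_eigenvalue_block_i_general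
    (K : ℕ)
    (n : Fin K → ℕ)
    (w : Fin K → ℝ)
    (N : ℕ) (hN : N = ∑ i, n i)
    (β : Fin N → Fin K)
    (hβ : ∀ m : Fin N,
      (∑ k ∈ Finset.univ.filter (fun k => k < β m), n k) ≤ m.val ∧
      m.val < (∑ k ∈ Finset.univ.filter (fun k => k < β m), n k) + n (β m))
    (W : Matrix (Fin N) (Fin N) ℝ)
    (hW : ∀ m p, W m p = if m ≠ p ∧ β m = β p then w (β m) else 0)
    (i : Fin K)
    (wt : Fin K → ℝ)
    (Wt : Matrix (Fin N) (Fin N) ℝ)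
    (hWt : ∀ m p, Wt m p =
      if β m = β p then W m p
      else if β m = i then wt (β p)
      else if β p = i then wt (β m)
      else 0)
    (Dt : Matrix (Fin N) (Fin N) ℝ)
    (hDt : Dt = Matrix.diagonal (fun m => ∑ p, Wt m p))
    (Lt : Matrix (Fin N) (Fin N) ℝ)
    (hLt : Lt = Dt - Wt) :
    n i - 1 ≤
      Module.finrank ℝ
        ↥(LinearMap.ker
          (Matrix.toLin'
            (Lt -
              ((n i : ℝ) * w i + ∑ j ∈ Finset.univ.erase i, (n j : ℝ) * wt j) •
                (1 : Matrix (Fin N) (Fin N) ℝ)))) := by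
  set μ : ℝ := n i * w i + ∑ j ∈ univ.erase i, (n j : ℝ) * wt j
  set s : Finset (Fin N) := {m | β m = i}
  set g : Fin K → ℝ := fun j => if j = i then w i else wt j
  have hcard := card_fiber_eq_of_mem_Ico n (fun j => ∑ k ∈ univ.filter (· < j), n k) hN β hβ
  have hin : ∀ p ∈ s, ∀ q, q ≠ p → Wt p q = g (β q) := fun p hp q hqp =>
    corruptedAffinity_apply_of_mem_block hW hWt (mem_filter.1 hp).2 hqp
  have hout : ∀ p ∉ s, ∃ b, ∀ q ∈ s, Wt p q = b := fun p hp =>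
    ⟨wt (β p), fun q hq => corruptedAffinity_apply_of_not_mem_block hWt
      (fun h => hp (mem_filter.2 ⟨mem_univ p, h⟩)) (mem_filter.1 hq).2⟩
  have heig : ∑ q, g (β q) = μ := by
    rw [sum_comp_eq_sum_card_nsmul, ← add_sum_erase _ _ (mem_univ i)]
    simp only [hcard, nsmul_eq_mul, g, if_pos]
    exact congrArg _ (sum_congr rfl fun j hj => by rw [if_neg (ne_of_mem_erase hj)])
  have hker : zeroSumSupportedOn ℝ s ≤ LinearMap.ker (toLin' (Lt - μ • 1)) := fun v hv => by
    rw [LinearMap.mem_ker, toLin'_apply, sub_mulVec, smul_mulVec, one_mulVec, sub_eq_zero,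
      ← heig, hLt, hDt]
    exact laplacian_mulVec_eq_smul_of_mem_zeroSumSupportedOn (a := w i) hin (fun q hq => by
      simp [g, (mem_filter.1 hq).2]) hout hv
  calc n i - 1 = #s - 1 := by rw [hcard]
    _ ≤ Module.finrank ℝ (zeroSumSupportedOn ℝ s) :=
      card_sub_one_le_finrank_zeroSumSupportedOn s
    _ ≤ _ := Submodule.finrank_mono hker

/-- For the group-similarity corrupted affinity matrix `W̃`, the value
`n i * w i + ∑_{j ≠ i} n j * w̃ i j` is a (standard) eigenvalue of the corrupted Laplacian
`L̃` with geometric multiplicity at least `n i - 1`; that is, the kernel of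
`L̃ - (n i * w i + ∑_{j ≠ i} n j * w̃ i j) • I` has dimension at least `n i - 1`. -/
theorem groupSim_standard_eigenvalue_block_i
    (K : ℕ) (hK : 2 ≤ K)
    (n : Fin K → ℕ) (hn : ∀ i, 2 ≤ n i)
    (w : Fin K → ℝ) (hw : ∀ i, 0 < w i)
    (N : ℕ) (hN : N = ∑ i, n i)
    (β : Fin N → Fin K)
    (hβ : ∀ m : Fin N,
      (∑ k ∈ Finset.univ.filter (fun k => k < β m), n k) ≤ m.val ∧
      m.val < (∑ k ∈ Finset.univ.filter (fun k => k < β m), n k) + n (β m))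
    (W : Matrix (Fin N) (Fin N) ℝ)
    (hW : ∀ m p, W m p = if m ≠ p ∧ β m = β p then w (β m) else 0)
    (i : Fin K)
    (wt : Fin K → ℝ) (hwt : ∀ j, j ≠ i → 0 < wt j)
    (Wt : Matrix (Fin N) (Fin N) ℝ)
    (hWt : ∀ m p, Wt m p =
      if β m = β p then W m p
      else if β m = i then wt (β p)
      else if β p = i then wt (β m)
      else 0)
    (Dt : Matrix (Fin N) (Fin N) ℝ)
    (hDt : Dt = Matrix.diagonal (fun m => ∑ p, Wt m p))
    (Lt : Matrix (Fin N) (Fin N) ℝ)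
    (hLt : Lt = Dt - Wt) :
    n i - 1 ≤
      Module.finrank ℝ
        ↥(LinearMap.ker
          (Matrix.toLin'
            (Lt -
              ((n i : ℝ) * w i + ∑ j ∈ Finset.univ.erase i, (n j : ℝ) * wt j) •
                (1 : Matrix (Fin N) (Fin N) ℝ)))) :=
  groupSim_standard_eigenvalue_block_i_general K n w N hN β hβ W hW i wt Wt hWt Dt hDt Lt hLt
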